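/- arXiv:1301.5522 — 5 statements merged into one kernel-verified Lean document; each statement's English description precedes it below -/
import Mathlib

section
/- Let S, C, I be positive reals parameterized as S = SNR^{β_sd}, I = SNR^{β_rd}, C = SNR^{β_sr} with β_sd > 0. Then with b1 = log(1+(√I+√S)²)/log(1+S) and b2 = log(1+C+S)/log(1+S), the limit as SNR → ∞ of (log(1+S)/log(1+SNR))·(1 + (b1-1)(b2-1)/((b1-1)+(b2-1))) equals β_sd + ([β_rd-β_sd]⁺·[β_sr-β_sd]⁺)/([β_rd-β_sd]⁺ + [β_sr-β_sd]⁺), where the last fraction is interpreted as 0 when both bracketed terms are 0. -/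
/-!
Each logarithm in the expression is the logarithm of a quantity squeezed between `SNR ^ m` and
`K * SNR ^ m`, where `m` is the largest exponent involved, so divided by `log SNR` it tends to `m`.
Hence `b₁ - 1 → [β_rd - β_sd]⁺ / β_sd` and `b₂ - 1 → [β_sr - β_sd]⁺ / β_sd`. Since `b₁, b₂ ≥ 1`,
the passage to the limit in `(a, b) ↦ a * b / (a + b)` only needs continuity on the closed
nonnegative quadrant, where `0 ≤ a * b / (a + b) ≤ a` covers the origin (value `0`, as `x / 0 = 0`).
-/

open Real Filter Topology

lemma tendsto_log_div_log_of_rpow_le {p K : ℝ} (hK : 0 < K) {f : ℝ → ℝ}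
    (hf : ∀ᶠ x in atTop, x ^ p ≤ f x ∧ f x ≤ K * x ^ p) :
    Tendsto (fun x => log (f x) / log x) atTop (𝓝 p) := by
  have hupper : Tendsto (fun x => log K / log x + p) atTop (𝓝 p) := by
    simpa using (tendsto_const_nhds.div_atTop tendsto_log_atTop).add_const p
  refine tendsto_of_tendsto_of_tendsto_of_le_of_le' tendsto_const_nhds hupper ?_ ?_ <;>
    filter_upwards [eventually_gt_atTop 1, hf] with x hx ⟨hlow, hup⟩
  all_goals
    have hlx : 0 < log x := log_pos hx
    have hxp : 0 < x ^ p := rpow_pos_of_pos (by linarith) p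
    have hlog_rpow : log (x ^ p) = p * log x := log_rpow (by linarith) p
  · rw [le_div_iff₀ hlx, ← hlog_rpow]
    exact log_le_log hxp hlow
  · have : log (f x) ≤ log K + p * log x := by
      rw [← hlog_rpow, ← log_mul hK.ne' hxp.ne']
      exact log_le_log (hxp.trans_le hlow) hup
    rw [div_add' _ _ _ hlx.ne', div_le_div_iff_of_pos_right hlx]
    exact this

lemma tendsto_div_of_tendsto_div_common {α : Type*} {l : Filter α} {f g h : α → ℝ} {a b : ℝ}
    (hb : b ≠ 0) (hf : Tendsto (fun x => f x / h x) l (𝓝 a))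
    (hg : Tendsto (fun x => g x / h x) l (𝓝 b)) (hh : ∀ᶠ x in l, h x ≠ 0) :
    Tendsto (fun x => f x / g x) l (𝓝 (a / b)) :=
  (hf.div hg hb).congr' <| hh.mono fun _ hx => div_div_div_cancel_right₀ hx _ _

lemma mul_div_add_le_left {a b : ℝ} (ha : 0 ≤ a) (hb : 0 ≤ b) : a * b / (a + b) ≤ a :=
  div_le_of_le_mul₀ (add_nonneg ha hb) ha (by nlinarith)

lemma Filter.Tendsto.mul_div_add {α : Type*} {l : Filter α} [l.NeBot] {f g : α → ℝ} {a b : ℝ}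
    (hf : Tendsto f l (𝓝 a)) (hg : Tendsto g l (𝓝 b))
    (hf0 : ∀ᶠ x in l, 0 ≤ f x) (hg0 : ∀ᶠ x in l, 0 ≤ g x) :
    Tendsto (fun x => f x * g x / (f x + g x)) l (𝓝 (a * b / (a + b))) := by
  by_cases hab : a + b = 0
  · have ha : a = 0 := by linarith [ge_of_tendsto hf hf0, ge_of_tendsto hg hg0]
    rw [hab, div_zero]
    refine tendsto_of_tendsto_of_tendsto_of_le_of_le' tendsto_const_nhds (ha ▸ hf) ?_ ?_ <;>
      filter_upwards [hf0, hg0] with x hfx hgx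
    · positivity
    · exact mul_div_add_le_left hfx hgx
  · exact (hf.mul hg).div (hf.add hg) hab

lemma mul_div_add_div_const (a b : ℝ) {c : ℝ} (hc : c ≠ 0) :
    a / c * (b / c) / (a / c + b / c) = a * b / (a + b) / c := by
  by_cases hab : a + b = 0
  · rw [← add_div, hab]; simp
  · field_simp


lemma max_div_sub_one (r : ℝ) {s : ℝ} (hs : s ≠ 0) : max r s / s - 1 = max (r - s) 0 / s := by
  rw [div_sub_one hs, ← max_sub_sub_right, sub_self]

lemma add_le_sqrt_add_sqrt_sq {a b : ℝ} (ha : 0 ≤ a) (hb : 0 ≤ b) : a + b ≤ (√a + √b) ^ 2 := by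
  nlinarith [sq_sqrt ha, sq_sqrt hb, sqrt_nonneg a, sqrt_nonneg b]

lemma sqrt_add_sqrt_sq_le {a b : ℝ} (ha : 0 ≤ a) (hb : 0 ≤ b) : (√a + √b) ^ 2 ≤ 2 * (a + b) := by
  nlinarith [sq_sqrt ha, sq_sqrt hb, sq_nonneg (√a - √b)]

lemma rpow_max_le_add_rpow {x : ℝ} (hx : 0 ≤ x) (r s : ℝ) : x ^ max r s ≤ x ^ r + x ^ s := by
  rcases max_cases r s with ⟨h, _⟩ | ⟨h, _⟩ <;> rw [h]
  · exact le_add_of_nonneg_right (rpow_nonneg hx s)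
  · exact le_add_of_nonneg_left (rpow_nonneg hx r)

lemma add_rpow_le_two_mul_rpow_max {x : ℝ} (hx : 1 ≤ x) (r s : ℝ) :
    x ^ r + x ^ s ≤ 2 * x ^ max r s := by
  have := rpow_le_rpow_of_exponent_le hx (le_max_left r s)
  have := rpow_le_rpow_of_exponent_le hx (le_max_right r s)
  linarith

lemma tendsto_log_one_add_rpow_div_log {p : ℝ} (hp : 0 ≤ p) :
    Tendsto (fun x => log (1 + x ^ p) / log x) atTop (𝓝 p) := by
  refine tendsto_log_div_log_of_rpow_le two_pos ?_
  filter_upwards [eventually_ge_atTop 1] with x hx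
  have := one_le_rpow hx hp
  constructor <;> linarith

lemma tendsto_log_one_add_sqrt_add_sqrt_sq_div_log {r s : ℝ} (hs : 0 ≤ s) :
    Tendsto (fun x => log (1 + (√(x ^ r) + √(x ^ s)) ^ 2) / log x) atTop (𝓝 (max r s)) := by
  refine tendsto_log_div_log_of_rpow_le (K := 5) (by norm_num) ?_
  filter_upwards [eventually_ge_atTop 1] with x hx
  have hr := rpow_nonneg (zero_le_one.trans hx) r
  have hs' := rpow_nonneg (zero_le_one.trans hx) s
  have := rpow_max_le_add_rpow (zero_le_one.trans hx) r s
  have := add_rpow_le_two_mul_rpow_max hx r s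
  have := one_le_rpow hx (hs.trans (le_max_right r s))
  have := add_le_sqrt_add_sqrt_sq hr hs'
  have := sqrt_add_sqrt_sq_le hr hs'
  constructor <;> linarith

lemma tendsto_log_one_add_rpow_add_rpow_div_log {r s : ℝ} (hs : 0 ≤ s) :
    Tendsto (fun x => log (1 + x ^ r + x ^ s) / log x) atTop (𝓝 (max r s)) := by
  refine tendsto_log_div_log_of_rpow_le (K := 3) (by norm_num) ?_
  filter_upwards [eventually_ge_atTop 1] with x hx
  have := rpow_max_le_add_rpow (zero_le_one.trans hx) r s
  have := add_rpow_le_two_mul_rpow_max hx r s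
  have := one_le_rpow hx (hs.trans (le_max_right r s))
  constructor <;> linarith

lemma tendsto_log_div_log_one_add_rpow_sub_one {r s : ℝ} (hs : 0 < s) {u : ℝ → ℝ}
    (hu : Tendsto (fun x => log (u x) / log x) atTop (𝓝 (max r s))) :
    Tendsto (fun x => log (u x) / log (1 + x ^ s) - 1) atTop (𝓝 (max (r - s) 0 / s)) := by
  rw [← max_div_sub_one r hs.ne']
  refine (tendsto_div_of_tendsto_div_common hs.ne' hu (tendsto_log_one_add_rpow_div_log hs.le)
    (tendsto_log_atTop.eventually_ne_atTop 0)).sub_const 1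

lemma eventually_log_div_log_one_add_rpow_sub_one_nonneg {s : ℝ} {u : ℝ → ℝ}
    (hu : ∀ᶠ x in atTop, 1 + x ^ s ≤ u x) :
    ∀ᶠ x in atTop, 0 ≤ log (u x) / log (1 + x ^ s) - 1 := by
  filter_upwards [eventually_gt_atTop 0, hu] with x hx hux
  have hlog : 0 < log (1 + x ^ s) := log_pos (by linarith [rpow_pos_of_pos hx s])
  rw [sub_nonneg, one_le_div hlog]
  exact log_le_log (by linarith [rpow_pos_of_pos hx s]) hux

lemma tendsto_log_one_add_rpow_div_log_one_add {p : ℝ} (hp : 0 ≤ p) :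
    Tendsto (fun x => log (1 + x ^ p) / log (1 + x)) atTop (𝓝 p) := by
  simpa only [rpow_one, div_one] using tendsto_div_of_tendsto_div_common one_ne_zero
    (tendsto_log_one_add_rpow_div_log hp) (tendsto_log_one_add_rpow_div_log zero_le_one)
    (tendsto_log_atTop.eventually_ne_atTop 0)

theorem gdof_cutset_limit_general (βsd βrd βsr : ℝ) (hsd : 0 < βsd) :
    Tendsto (fun SNR : ℝ =>
      (Real.log (1 + SNR ^ βsd) / Real.log (1 + SNR)) *
        (1 + ((Real.log (1 + (Real.sqrt (SNR ^ βrd) + Real.sqrt (SNR ^ βsd)) ^ 2)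
                / Real.log (1 + SNR ^ βsd)) - 1) *
             ((Real.log (1 + SNR ^ βsr + SNR ^ βsd)
                / Real.log (1 + SNR ^ βsd)) - 1) /
            (((Real.log (1 + (Real.sqrt (SNR ^ βrd) + Real.sqrt (SNR ^ βsd)) ^ 2)
                / Real.log (1 + SNR ^ βsd)) - 1) +
             ((Real.log (1 + SNR ^ βsr + SNR ^ βsd)
                / Real.log (1 + SNR ^ βsd)) - 1))))
      atTop
      (nhds (βsd + (max (βrd - βsd) 0 * max (βsr - βsd) 0) /
        (max (βrd - βsd) 0 + max (βsr - βsd) 0))) := by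
  have hb1 := tendsto_log_div_log_one_add_rpow_sub_one hsd
    (tendsto_log_one_add_sqrt_add_sqrt_sq_div_log (r := βrd) hsd.le)
  have hb2 := tendsto_log_div_log_one_add_rpow_sub_one hsd
    (tendsto_log_one_add_rpow_add_rpow_div_log (r := βsr) hsd.le)
  have hb1_nonneg := eventually_log_div_log_one_add_rpow_sub_one_nonneg (s := βsd)
    (u := fun x => 1 + (√(x ^ βrd) + √(x ^ βsd)) ^ 2) <| by
    filter_upwards [eventually_ge_atTop 0] with x hx
    linarith [add_le_sqrt_add_sqrt_sq (rpow_nonneg hx βrd) (rpow_nonneg hx βsd),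
      rpow_nonneg hx βrd]
  have hb2_nonneg := eventually_log_div_log_one_add_rpow_sub_one_nonneg (s := βsd)
    (u := fun x => 1 + x ^ βsr + x ^ βsd) <| by
    filter_upwards [eventually_ge_atTop 0] with x hx
    linarith [rpow_nonneg hx βsr]
  have h := (tendsto_log_one_add_rpow_div_log_one_add hsd.le).mul
    ((hb1.mul_div_add hb2 hb1_nonneg hb2_nonneg).const_add 1)
  rwa [mul_div_add_div_const _ _ hsd.ne', mul_one_add, mul_div_cancel₀ _ hsd.ne'] at h

/-- gDoF upper bound of the Gaussian HD relay channel from the cut-set bound. -/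
theorem gdof_cutset_limit (βsd βrd βsr : ℝ) (hsd : 0 < βsd)
    (hrd : 0 ≤ βrd) (hsr : 0 ≤ βsr) :
    Tendsto (fun SNR : ℝ =>
      (Real.log (1 + SNR ^ βsd) / Real.log (1 + SNR)) *
        (1 + ((Real.log (1 + (Real.sqrt (SNR ^ βrd) + Real.sqrt (SNR ^ βsd)) ^ 2)
                / Real.log (1 + SNR ^ βsd)) - 1) *
             ((Real.log (1 + SNR ^ βsr + SNR ^ βsd)
                / Real.log (1 + SNR ^ βsd)) - 1) /
            (((Real.log (1 + (Real.sqrt (SNR ^ βrd) + Real.sqrt (SNR ^ βsd)) ^ 2)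
                / Real.log (1 + SNR ^ βsd)) - 1) +
             ((Real.log (1 + SNR ^ βsr + SNR ^ βsd)
                / Real.log (1 + SNR ^ βsd)) - 1))))
      atTop
      (nhds (βsd + (max (βrd - βsd) 0 * max (βsr - βsd) 0) /
        (max (βrd - βsd) 0 + max (βsr - βsd) 0))) :=
  gdof_cutset_limit_general βsd βrd βsr hsd
end

section
/- The function f(γ) = H(γ) + (1-γ)·log₂(1/(1-γ)) on [0,1), where H(γ) = -γ log₂ γ - (1-γ) log₂(1-γ) is the binary entropy function, attains its maximum value of at most 1.5112 bits and, in particular, max_{γ∈[0,1]} f(γ) ≤ 1.6 bits. -/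
open Real

/-- Binary entropy function in bits. -/
noncomputable def binH (γ : ℝ) : ℝ := -γ * Real.logb 2 γ - (1 - γ) * Real.logb 2 (1 - γ)

/-!
In nats the function is `negMulLog γ + 2 * negMulLog (1 - γ)`, which is concave and maximal at
the root `γ* ≈ 0.55013` of `γ = e (1 - γ)²`. Bounding `negMulLog` by its tangent lines at `γ*`
and at `1 - γ*` gives an affine majorant whose slope (almost) vanishes, so its value
`1 - γ* - log γ* ≈ 1.04747` nats `≈ 1.51119` bits is essentially the maximum. What remains is to
certify `log γ*` and `log (1 - γ*)` to within `10⁻⁵`, via the Taylor series of `log (1 - x)`.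
-/

lemma negMulLog_le_tangent {x c : ℝ} (hx : 0 ≤ x) (hc : 0 < c) :
    negMulLog x ≤ -x * log c + c - x := by
  calc negMulLog x = x / c * negMulLog c + c * negMulLog (x / c) := by
        rw [← negMulLog_mul, mul_div_cancel₀ _ hc.ne']
    _ ≤ x / c * negMulLog c + c * (1 - x / c) := by
        gcongr
        exact negMulLog_le_one_sub_self (by positivity)
    _ = -x * log c + c - x := by
        rw [negMulLog]
        field_simp
        ring

lemma log_55013_div_100000_ge : -(59761 / 100000) ≤ log (55013 / 100000 : ℝ) := by
  have hseries := (abs_le.1 (abs_log_sub_add_sum_range_le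
    (x := 5013 / 55013) (by norm_num [abs_of_pos]) 8)).2
  have hsplit : (55013 / 100000 : ℝ) = (1 - 5013 / 55013)⁻¹ / 2 := by norm_num
  have hlog2 := log_two_lt_d9
  rw [hsplit, log_div (by norm_num) (by norm_num), log_inv]
  norm_num [Finset.sum_range_succ, abs_of_pos] at hseries hlog2 ⊢
  linarith

lemma log_44987_div_100000_ge : -(798805 / 1000000) ≤ log (44987 / 100000 : ℝ) := by
  have hseries := (abs_le.1 (abs_log_sub_add_sum_range_le
    (x := 5013 / 50000) (by norm_num [abs_of_pos]) 8)).1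
  have hsplit : (44987 / 100000 : ℝ) = (1 - 5013 / 50000) / 2 := by norm_num
  have hlog2 := log_two_lt_d9
  rw [hsplit, log_div (by norm_num) (by norm_num)]
  norm_num [Finset.sum_range_succ, abs_of_pos] at hseries hlog2 ⊢
  linarith

lemma negMulLog_add_two_mul_negMulLog_one_sub_le {γ : ℝ} (h0 : 0 ≤ γ) (h1 : γ ≤ 1) :
    negMulLog γ + 2 * negMulLog (1 - γ) ≤ 104748 / 100000 := by
  have h1' : 0 ≤ 1 - γ := sub_nonneg.2 h1
  have tangent₁ := negMulLog_le_tangent h0 (c := 55013 / 100000) (by norm_num)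
  have tangent₂ := negMulLog_le_tangent h1' (c := 44987 / 100000) (by norm_num)
  have log₁ := mul_le_mul_of_nonneg_left log_55013_div_100000_ge h0
  have log₂ := mul_le_mul_of_nonneg_left log_44987_div_100000_ge h1'
  linarith

lemma binH_add_mul_logb_inv_eq (γ : ℝ) :
    binH γ + (1 - γ) * logb 2 (1 / (1 - γ)) = (negMulLog γ + 2 * negMulLog (1 - γ)) / log 2 := by
  rw [binH, one_div, logb_inv]
  simp only [negMulLog, logb]
  ring

/-- The function H(γ) + (1-γ)log₂(1/(1-γ)) is at most 1.5112 bits on [0,1],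
in particular at most 1.6 bits. -/
theorem entropy_gap_bound :
    (∀ γ ∈ Set.Icc (0:ℝ) 1,
      binH γ + (1 - γ) * Real.logb 2 (1 / (1 - γ)) ≤ 1.5112) ∧
    (∀ γ ∈ Set.Icc (0:ℝ) 1,
      binH γ + (1 - γ) * Real.logb 2 (1 / (1 - γ)) ≤ 1.6) := by
  have key : ∀ γ ∈ Set.Icc (0:ℝ) 1, binH γ + (1 - γ) * logb 2 (1 / (1 - γ)) ≤ 1.5112 := by
    rintro γ ⟨h0, h1⟩
    rw [binH_add_mul_logb_inv_eq, div_le_iff₀ (by positivity)]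
    have hlog2 := log_two_gt_d9
    norm_num at hlog2 ⊢
    linarith [negMulLog_add_two_mul_negMulLog_one_sub_le h0 h1]
  exact ⟨key, fun γ hγ => (key γ hγ).trans (by norm_num)⟩
end

section
/- For any γ ∈ [0,1] and positive reals subject to P_{s,0}, and channel gains C, S > 0: γ·log₂((1 + C·P_{s,0} + S·P_{s,0})/(1 + max{C,S}·P_{s,0})) ≤ γ·log₂ 2 ≤ 1 bit; combined with H(γ) ≤ 1, the gap between the cut-set bound with terms I_3 = log(1+(C+S)P_{s,0}) and the PDF inner bound with I_7 = log(1+max{C,S}P_{s,0}) is at most 1 bit. -/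
open Real

theorem binH_eq_binEntropy_div_log_two (γ : ℝ) : binH γ = binEntropy γ / log 2 := by
  simp only [binH, binEntropy, logb, log_inv]
  ring

theorem binH_le_one (γ : ℝ) : binH γ ≤ 1 := by
  rw [binH_eq_binEntropy_div_log_two, div_le_one (log_pos one_lt_two)]
  exact binEntropy_le_log_two

theorem logb_div_le_one_of_le_mul {b x y : ℝ} (hb : 1 < b) (hx : 0 < x) (hy : 0 < y)
    (h : x ≤ b * y) : logb b (x / y) ≤ 1 := by
  rw [← logb_self_eq_one hb]
  exact logb_le_logb_of_le hb (div_pos hx hy) ((div_le_iff₀ hy).2 (by linarith))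

theorem one_add_mul_add_mul_le_two_mul_max {C S P : ℝ} (hP : 0 ≤ P) :
    1 + C * P + S * P ≤ 2 * (1 + max C S * P) := by
  have hCP : C * P ≤ max C S * P := mul_le_mul_of_nonneg_right (le_max_left C S) hP
  have hSP : S * P ≤ max C S * P := mul_le_mul_of_nonneg_right (le_max_right C S) hP
  linarith

/-- 1-bit gap for PDF with deterministic switch. -/
theorem pdf_det_switch_one_bit (γ P C S : ℝ) (hγ : γ ∈ Set.Icc (0:ℝ) 1)
    (hP : 0 < P) (hC : 0 < C) (hS : 0 < S) :
    γ * Real.logb 2 ((1 + C * P + S * P) / (1 + max C S * P)) ≤ γ * Real.logb 2 2 ∧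
    γ * Real.logb 2 2 ≤ 1 ∧
    max (binH γ)
      (γ * (Real.logb 2 (1 + (C + S) * P) - Real.logb 2 (1 + max C S * P))) ≤ 1 := by
  obtain ⟨hγ0, hγ1⟩ := hγ
  have hmax : 0 < 1 + max C S * P := by positivity
  have hgap : logb 2 ((1 + C * P + S * P) / (1 + max C S * P)) ≤ 1 :=
    logb_div_le_one_of_le_mul one_lt_two (by positivity) hmax
      (one_add_mul_add_mul_le_two_mul_max hP.le)
  have hdiff : logb 2 (1 + (C + S) * P) - logb 2 (1 + max C S * P)
      = logb 2 ((1 + C * P + S * P) / (1 + max C S * P)) := by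
    rw [logb_div (by positivity) hmax.ne', add_mul, add_assoc]
  have hγgap : γ * logb 2 ((1 + C * P + S * P) / (1 + max C S * P)) ≤ γ := by
    simpa using mul_le_mul_of_nonneg_left hgap hγ0
  rw [logb_self_eq_one one_lt_two, mul_one, hdiff]
  exact ⟨hγgap, hγ1, max_le (binH_le_one γ) (hγgap.trans hγ1)⟩
end

section
/- For a positive semidefinite Hermitian matrix K, matrix H (of compatible dimensions), and scalar a > 0: log det(I + a·H K Hᴴ) ≤ Rank(H)·log(max{1, a·Trace(K)}) + log det(I + H Hᴴ). -/
open Matrix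
open scoped ComplexOrder

/-!
Since `K ≤ tr K • 1` in the Loewner order, conjugating by `H` gives
`a • H K Hᴴ ≤ c • H Hᴴ` with `c = a · tr K`, and the determinant is monotone on positive
definite matrices; hence `det (1 + a • H K Hᴴ) ≤ ∏ (1 + c μᵢ)` over the eigenvalues
`μᵢ ≥ 0` of `H Hᴴ`. Each factor with `μᵢ ≠ 0` is at most `max 1 c · (1 + μᵢ)`, and there
are `rank H` such factors.
-/

lemma Fintype.prod_one_add_mul_le_max_one_pow_mul {ι : Type*} [Fintype ι] {x : ι → ℝ}
    (hx : ∀ i, 0 ≤ x i) {c : ℝ} (hc : 0 ≤ c) :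
    ∏ i, (1 + c * x i) ≤ max 1 c ^ Fintype.card {i // x i ≠ 0} * ∏ i, (1 + x i) := by
  classical
  have hfactor : ∀ i ∈ Finset.univ,
      1 + c * x i ≤ (if x i ≠ 0 then max 1 c else 1) * (1 + x i) := by
    intro i _
    split_ifs with hxi
    · nlinarith [hx i, le_max_left 1 c, le_max_right 1 c]
    · simp_all
  calc ∏ i, (1 + c * x i)
      ≤ ∏ i, (if x i ≠ 0 then max 1 c else 1) * (1 + x i) :=
        Finset.prod_le_prod (fun i _ => by have := hx i; positivity) hfactor
    _ = max 1 c ^ Fintype.card {i // x i ≠ 0} * ∏ i, (1 + x i) := by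
        rw [Finset.prod_mul_distrib, Finset.prod_ite, Finset.prod_const, Finset.prod_const_one,
          mul_one, Fintype.card_subtype]

namespace Matrix

open scoped MatrixOrder

variable {m n 𝕜 : Type*} [RCLike 𝕜] [Fintype m] [Fintype n]

lemma mul_mul_conjTranspose_le_mul_mul_conjTranspose (H : Matrix m n 𝕜)
    {A B : Matrix n n 𝕜} (h : A ≤ B) : H * A * Hᴴ ≤ H * B * Hᴴ := by
  rw [le_iff, ← Matrix.sub_mul, ← Matrix.mul_sub]
  exact (le_iff.mp h).mul_mul_conjTranspose_same H

variable [DecidableEq m] [DecidableEq n]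

lemma IsHermitian.coe_re_trace {A : Matrix n n 𝕜} (hA : A.IsHermitian) :
    (RCLike.re A.trace : 𝕜) = A.trace := by
  rw [hA.trace_eq_sum_eigenvalues, ← RCLike.ofReal_sum, RCLike.ofReal_re]

lemma IsHermitian.det_cfc {A : Matrix n n 𝕜} (hA : A.IsHermitian) (f : ℝ → ℝ) :
    (cfc f A).det = ∏ i, (f (hA.eigenvalues i) : 𝕜) := by
  rw [hA.cfc_eq, IsHermitian.cfc, det_map, det_diagonal]
  rfl

lemma IsHermitian.det_one_add_smul {A : Matrix n n 𝕜} (hA : A.IsHermitian) (r : ℝ) :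
    (1 + (r : 𝕜) • A).det = ((∏ i, (1 + r * hA.eigenvalues i) : ℝ) : 𝕜) := by
  have : cfc (fun x : ℝ => 1 + r * x) A = 1 + (r : 𝕜) • A := by
    rw [cfc_add .., cfc_const_one .., cfc_const_mul .., cfc_id' ..,
      RCLike.real_smul_eq_coe_smul (K := 𝕜)]
  rw [← this, hA.det_cfc, RCLike.ofReal_prod]

lemma PosSemidef.le_trace_smul_one {K : Matrix n n 𝕜} (hK : K.PosSemidef) :
    K ≤ K.trace • 1 := by
  have hspec : ∀ x ∈ spectrum ℝ K, x ≤ RCLike.re K.trace := by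
    rintro x hx
    obtain ⟨i, rfl⟩ := hK.1.spectrum_real_eq_range_eigenvalues ▸ hx
    rw [hK.1.trace_eq_sum_eigenvalues, ← RCLike.ofReal_sum, RCLike.ofReal_re]
    exact Finset.single_le_sum (fun j _ => hK.eigenvalues_nonneg j) (Finset.mem_univ i)
  simpa only [Algebra.algebraMap_eq_smul_one, RCLike.real_smul_eq_coe_smul (K := 𝕜),
    hK.1.coe_re_trace] using le_algebraMap_of_spectrum_le hspec hK.1

lemma one_le_det_of_one_le {M : Matrix n n 𝕜} (h : 1 ≤ M) : 1 ≤ M.det := by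
  have hM : M.IsHermitian := by simpa using (le_iff.mp h).1.add isHermitian_one
  have hspec := (CFC.one_le_iff (R := ℝ) M hM).mp h
  rw [hM.det_eq_prod_eigenvalues, ← RCLike.ofReal_prod, ← RCLike.ofReal_one,
    RCLike.ofReal_le_ofReal]
  exact Finset.one_le_prod fun i _ => hspec _ (hM.eigenvalues_mem_spectrum_real i)

lemma PosDef.det_le_det_of_le {A B : Matrix n n 𝕜} (hA : A.PosDef) (h : A ≤ B) :
    A.det ≤ B.det := by
  set S := CFC.sqrt A
  have hSS : S * S = A := CFC.sqrt_mul_sqrt_self A hA.posSemidef.nonneg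
  have hS : IsSelfAdjoint S := (CFC.sqrt_nonneg A).isSelfAdjoint
  have hSd : IsUnit S.det := (isUnit_iff_isUnit_det S).mp hA.isStrictlyPositive.sqrt.isUnit
  have h1 : 1 ≤ S⁻¹ * B * S⁻¹ := by
    have := IsSelfAdjoint.conjugate_le_conjugate h (IsHermitian.inv hS)
    rwa [← hSS, Matrix.mul_assoc, Matrix.mul_assoc, mul_nonsing_inv _ hSd, Matrix.mul_one,
      nonsing_inv_mul _ hSd] at this
  have hB : B = S * (S⁻¹ * B * S⁻¹) * S := by
    simp only [← Matrix.mul_assoc, mul_nonsing_inv _ hSd, Matrix.one_mul]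
    rw [Matrix.mul_assoc, nonsing_inv_mul _ hSd, Matrix.mul_one]
  have hdet : B.det = A.det * (S⁻¹ * B * S⁻¹).det := by
    rw [← hSS, det_mul]
    nth_rw 1 [hB]
    rw [det_mul, det_mul]
    ring
  rw [hdet]
  exact le_mul_of_one_le_right hA.posSemidef.det_nonneg (one_le_det_of_one_le h1)

lemma det_one_add_smul_mul_mul_conjTranspose_le {K : Matrix n n 𝕜} (hK : K.PosSemidef)
    (H : Matrix m n 𝕜) {a : ℝ} (ha : 0 ≤ a) :
    (1 + (a : 𝕜) • (H * K * Hᴴ)).det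
      ≤ (1 + ((a * RCLike.re K.trace : ℝ) : 𝕜) • (H * Hᴴ)).det := by
  have haK : ((a : 𝕜) • K).PosSemidef := hK.smul (RCLike.ofReal_nonneg.mpr ha)
  have hle := mul_mul_conjTranspose_le_mul_mul_conjTranspose H haK.le_trace_smul_one
  rw [trace_smul, smul_eq_mul, ← hK.1.coe_re_trace, ← RCLike.ofReal_mul] at hle
  simp only [Matrix.mul_smul, Matrix.smul_mul, Matrix.mul_one] at hle
  refine PosDef.det_le_det_of_le (PosDef.one.add_posSemidef ?_) (add_le_add_right hle 1)
  exact (hK.mul_mul_conjTranspose_same H).smul (RCLike.ofReal_nonneg.mpr ha)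

end Matrix

/-- log det(I + a·H K Hᴴ) ≤ Rank(H)·log(max{1, a·Tr K}) + log det(I + H Hᴴ)
for PSD K and a > 0. -/
theorem logdet_trace_rank_bound {m n : ℕ}
    (K : Matrix (Fin n) (Fin n) ℂ) (hK : K.PosSemidef)
    (H : Matrix (Fin m) (Fin n) ℂ) (a : ℝ) (ha : 0 < a) :
    Real.log ((1 + (a : ℂ) • (H * K * Hᴴ)).det).re
      ≤ (H.rank : ℝ) * Real.log (max 1 (a * K.trace.re))
        + Real.log ((1 + H * Hᴴ).det).re := by
  have hHH := posSemidef_self_mul_conjTranspose H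
  have hpos : 0 < ((1 + (a : ℂ) • (H * K * Hᴴ)).det).re :=
    (Complex.lt_def.mp (PosDef.one.add_posSemidef ((hK.mul_mul_conjTranspose_same H).smul
      (Complex.zero_le_real.mpr ha.le))).det_pos).1
  have hwhite : ((1 + H * Hᴴ).det).re = ∏ i, (1 + hHH.1.eigenvalues i) := by
    have := hHH.1.det_one_add_smul 1
    simp only [RCLike.ofReal_one, one_smul, one_mul] at this
    rw [this]
    exact Complex.ofReal_re _
  have hreduce : ((1 + (a : ℂ) • (H * K * Hᴴ)).det).re
      ≤ ∏ i, (1 + a * K.trace.re * hHH.1.eigenvalues i) := by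
    have := det_one_add_smul_mul_mul_conjTranspose_le hK H ha.le
    rw [hHH.1.det_one_add_smul] at this
    exact (Complex.le_def.mp this).1
  have hprod := Fintype.prod_one_add_mul_le_max_one_pow_mul hHH.eigenvalues_nonneg
    (mul_nonneg ha.le (RCLike.nonneg_iff.mp hK.trace_nonneg).1)
  rw [← hHH.1.rank_eq_card_non_zero_eigs, rank_self_mul_conjTranspose] at hprod
  have hwhite_pos : 0 < ∏ i, (1 + hHH.1.eigenvalues i) :=
    Finset.prod_pos fun i _ => by linarith [hHH.eigenvalues_nonneg i]
  calc Real.log ((1 + (a : ℂ) • (H * K * Hᴴ)).det).re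
      ≤ Real.log (max 1 (a * K.trace.re) ^ H.rank * ∏ i, (1 + hHH.1.eigenvalues i)) :=
        Real.log_le_log hpos (hreduce.trans hprod)
    _ = _ := by
        rw [Real.log_mul (by positivity) hwhite_pos.ne', Real.log_pow, hwhite]
end

section
/- The function f(σ²) = 2·log₂(1+σ²) + (K-2)·log₂(1 + 1/σ²) on σ² > 0, for integer K ≥ 3, is minimized at σ² = K/2 − 1 (when K > 2), where it takes the value 2·log₂(K/2) + (K-2)·log₂((K/2)/(K/2-1)); moreover this minimum value is at most 2·log₂ K + 2·log₂(e/2). -/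
open Real Set

/-! For `x > 0`, `a log (1 + x) + b log (1 + 1/x) = (a + b) log (1 + x) - b log x`. Concavity of
`log` at the points `1` and `a x / b` with weights `a / (a + b)` and `b / (a + b)` shows that this
exceeds its value at `x = b / a`; with `a = 2` and `b = K - 2` the minimiser is `K/2 - 1`. The bound
on the minimum is `log (1 + u) ≤ u` applied to `(K - 2) log (1 + 2 / (K - 2))`. -/

lemma mul_log_le_log_one_sub_add_mul {w t : ℝ} (hw₀ : 0 ≤ w) (hw₁ : w ≤ 1) (ht : 0 < t) :
    w * log t ≤ log (1 - w + w * t) := by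
  have := strictConcaveOn_log_Ioi.concaveOn.2 (mem_Ioi.2 one_pos) (mem_Ioi.2 ht)
    (sub_nonneg.2 hw₁) hw₀ (sub_add_cancel 1 w)
  simpa using this

theorem isMinOn_mul_log_one_add_add_mul_log_one_add_inv {a b : ℝ} (ha : 0 < a) (hb : 0 < b) :
    IsMinOn (fun x => a * log (1 + x) + b * log (1 + 1 / x)) (Ioi 0) (b / a) := by
  intro x (hx : 0 < x)
  have hab : 0 < a + b := by positivity
  have hjensen := mul_log_le_log_one_sub_add_mul (w := b / (a + b)) (t := a * x / b)
    (by positivity) (div_le_one_of_le₀ (by linarith) hab.le) (by positivity)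
  have hmean : 1 - b / (a + b) + b / (a + b) * (a * x / b) = a * (1 + x) / (a + b) := by
    field_simp; ring
  rw [hmean, log_div (by positivity) hab.ne', log_mul ha.ne' (by positivity),
    log_div (by positivity) hb.ne', log_mul ha.ne' hx.ne'] at hjensen
  have hlog_at_min : log (1 + b / a) = log (a + b) - log a := by
    rw [← log_div hab.ne' ha.ne']; congr 1; field_simp
  have hlog_inv_at_min : log (1 + 1 / (b / a)) = log (a + b) - log b := by
    rw [← log_div hab.ne' hb.ne']; congr 1; field_simp; ring
  have hlog_inv : log (1 + 1 / x) = log (1 + x) - log x := by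
    rw [← log_div (by positivity) hx.ne']; congr 1; field_simp; ring
  show a * log (1 + b / a) + b * log (1 + 1 / (b / a)) ≤ a * log (1 + x) + b * log (1 + 1 / x)
  rw [hlog_at_min, hlog_inv_at_min, hlog_inv]
  rw [div_mul_eq_mul_div, div_le_iff₀ hab] at hjensen
  linarith

theorem isMinOn_mul_logb_one_add_add_mul_logb_one_add_inv {B a b : ℝ} (hB : 1 < B)
    (ha : 0 < a) (hb : 0 < b) :
    IsMinOn (fun x => a * logb B (1 + x) + b * logb B (1 + 1 / x)) (Ioi 0) (b / a) := by
  have hdiv : (fun x => a * logb B (1 + x) + b * logb B (1 + 1 / x)) =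
      (· / log B) ∘ fun x => a * log (1 + x) + b * log (1 + 1 / x) := by
    funext x
    simp only [Function.comp, logb]
    ring
  rw [hdiv]
  exact (isMinOn_mul_log_one_add_add_mul_log_one_add_inv ha hb).comp_mono
    (monotone_div_right_of_nonneg (log_pos hB).le)

lemma mul_log_one_add_div_le {y c : ℝ} (hy : 0 < y) (hc : -y < c) : y * log (1 + c / y) ≤ c := by
  have hpos : 0 < 1 + c / y := by
    rw [one_add_div hy.ne']; exact div_pos (by linarith) hy
  calc y * log (1 + c / y) ≤ y * (c / y) := by
        gcongr; linarith [log_le_sub_one_of_pos hpos]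
    _ = c := by field_simp

lemma mul_logb_one_add_div_le {B y c : ℝ} (hB : 1 < B) (hy : 0 < y) (hc : -y < c) :
    y * logb B (1 + c / y) ≤ c * logb B (exp 1) := by
  rw [logb, logb, log_exp, ← mul_div_assoc, mul_one_div]
  gcongr
  · exact (log_pos hB).le
  · exact mul_log_one_add_div_le hy hc

/-- The quantization-noise gap term f(σ²) = 2log₂(1+σ²) + (K-2)log₂(1+1/σ²)
is minimized over σ² > 0 at σ² = K/2 - 1, where it takes the value
2log₂(K/2) + (K-2)log₂((K/2)/(K/2-1)) ≤ 2log₂ K + 2log₂(e/2). -/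
theorem diamond_quantization_min (K : ℕ) (hK : 3 ≤ K) :
    ((K:ℝ) / 2 - 1 ∈ Set.Ioi (0:ℝ)) ∧
    IsMinOn (fun x : ℝ => 2 * Real.logb 2 (1 + x) + ((K:ℝ) - 2) * Real.logb 2 (1 + 1 / x))
      (Set.Ioi 0) ((K:ℝ) / 2 - 1) ∧
    (2 * Real.logb 2 (1 + ((K:ℝ) / 2 - 1))
        + ((K:ℝ) - 2) * Real.logb 2 (1 + 1 / ((K:ℝ) / 2 - 1))
      = 2 * Real.logb 2 ((K:ℝ) / 2)
        + ((K:ℝ) - 2) * Real.logb 2 (((K:ℝ) / 2) / ((K:ℝ) / 2 - 1))) ∧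
    (2 * Real.logb 2 ((K:ℝ) / 2)
        + ((K:ℝ) - 2) * Real.logb 2 (((K:ℝ) / 2) / ((K:ℝ) / 2 - 1))
      ≤ 2 * Real.logb 2 (K:ℝ) + 2 * Real.logb 2 (Real.exp 1 / 2)) := by
  have hK' : (3 : ℝ) ≤ K := by exact_mod_cast hK
  have hσ_pos : (0 : ℝ) < K / 2 - 1 := by linarith
  have hK2 : (K : ℝ) - 2 ≠ 0 := by linarith
  refine ⟨hσ_pos, ?_, ?_, ?_⟩
  · rw [show (K : ℝ) / 2 - 1 = (K - 2) / 2 by ring]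
    exact isMinOn_mul_logb_one_add_add_mul_logb_one_add_inv one_lt_two two_pos (by linarith)
  · have hσ_inv : 1 + 1 / ((K : ℝ) / 2 - 1) = K / 2 / (K / 2 - 1) := by
      field_simp
      ring
    rw [add_sub_cancel, hσ_inv]
  · have hratio : (K : ℝ) / 2 / (K / 2 - 1) = 1 + 2 / (K - 2) := by
      field_simp
      ring
    have hbound := mul_logb_one_add_div_le one_lt_two (y := (K : ℝ) - 2) (c := 2)
      (by linarith) (by linarith)
    rw [hratio, logb_div (by positivity) two_ne_zero, logb_div (exp_ne_zero 1) two_ne_zero]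
    linarith
end
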